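/- Let X be an abelian group with 2X = X, and let f, g : X → ℂ be nowhere-vanishing functions, each satisfying the Hermitian condition f(−x) = conj(f(x)), which satisfy the Kac–Bernstein functional equation f(x+y)·g(x−y) = f(x)·f(y)·g(x)·g(−y) for all x, y ∈ X. Then there exist signs ε, δ ∈ {−1, 1}, unitary characters α, β : X → ℂ, a quadratic function P : X → ℝ, and a real constant r, such that f(x) = ε·α(x)·exp(P(x) + r) and g(x) = δ·β(x)·exp(P(x) − r) for all x ∈ X. -/

import Mathlib

/-!
Write `f = u · |f|` and `g = v · |g|` with unit-modulus phases `u, v`. Both the phases and the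
pair `log |f|, log |g|` again solve the Kac–Bernstein equation; the Hermitian condition makes the
phases satisfy `u x · u (-x) = 1` and the moduli even. For the phases, multiplying the equation at
`(x, y)` and `(y, x)` gives `u (x + y)² = (u x · u y)²`, while `(x, x)` gives `u (2x) · v 0 = (u x)²`;
so `v 0 · u` is a character as soon as every element is a double. For the moduli, comparing
`(y, y)` with `(y, -y)` shows that `log |f| - log |g|` is constant, after which the equation says
that `log |f|` is quadratic up to an additive constant.
-/

open Complex ComplexConjugate

section KacBernstein

variable {X : Type*} [AddCommGroup X]

def IsKacBernstein {M : Type*} [Mul M] (f g : X → M) : Prop :=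
  ∀ x y, f (x + y) * g (x - y) = f x * f y * g x * g (-y)

def IsAddKacBernstein {A : Type*} [Add A] (p q : X → A) : Prop :=
  ∀ x y, p (x + y) + q (x - y) = p x + p y + q x + q (-y)

theorem map_add_of_map_two_nsmul_add {M : Type*} [Mul M] (h2 : ∀ x : X, ∃ y, 2 • y = x)
    {φ : X → M} (h : ∀ x y, φ (2 • x + 2 • y) = φ (2 • x) * φ (2 • y)) (a b : X) :
    φ (a + b) = φ a * φ b := by
  obtain ⟨x, rfl⟩ := h2 a
  obtain ⟨y, rfl⟩ := h2 b
  exact h x y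

namespace IsKacBernstein

variable {M : Type*} [CommMonoid M] {u v : X → M}

theorem swap (h : IsKacBernstein u v) : IsKacBernstein v u := by
  intro x y
  have h' := h x (-y)
  rw [← sub_eq_add_neg, sub_neg_eq_add, neg_neg] at h'
  calc v (x + y) * u (x - y) = u (x - y) * v (x + y) := mul_comm _ _
    _ = u x * u (-y) * v x * v y := h'
    _ = v x * v y * u x * u (-y) := by ac_rfl

theorem map_two_nsmul_mul (h : IsKacBernstein u v) (hv : ∀ x, v x * v (-x) = 1) (x : X) :
    u (2 • x) * v 0 = u x * u x := by
  have h' := h x x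
  rwa [sub_self, ← two_nsmul, mul_assoc _ (v x), hv, mul_one] at h'

theorem map_add_mul_self (h : IsKacBernstein u v) (hv : ∀ x, v x * v (-x) = 1) (x y : X) :
    u (x + y) * u (x + y) = u x * u y * (u x * u y) :=
  calc u (x + y) * u (x + y) = u (x + y) * u (x + y) * (v (x - y) * v (-(x - y))) := by
        rw [hv, mul_one]
    _ = u (x + y) * v (x - y) * (u (y + x) * v (y - x)) := by
        rw [neg_sub, add_comm y x]; ac_rfl
    _ = u x * u y * v x * v (-y) * (u y * u x * v y * v (-x)) := by rw [h, h]
    _ = u x * u y * (u x * u y) * ((v x * v (-x)) * (v y * v (-y))) := by ac_rfl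
    _ = u x * u y * (u x * u y) := by rw [hv, hv, mul_one, mul_one]

theorem map_add (h : IsKacBernstein u v) (hv : ∀ x, v x * v (-x) = 1)
    (h2 : ∀ x : X, ∃ y, 2 • y = x) (a b : X) :
    v 0 * u (a + b) = v 0 * u a * (v 0 * u b) := by
  refine map_add_of_map_two_nsmul_add (φ := fun z => v 0 * u z) h2 (fun x y => ?_) a b
  calc v 0 * u (2 • x + 2 • y) = u (2 • (x + y)) * v 0 := by rw [smul_add, mul_comm]
    _ = u x * u y * (u x * u y) := by rw [h.map_two_nsmul_mul hv, h.map_add_mul_self hv]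
    _ = u (2 • x) * v 0 * (u (2 • y) * v 0) := by
        rw [h.map_two_nsmul_mul hv, h.map_two_nsmul_mul hv]; ac_rfl
    _ = v 0 * u (2 • x) * (v 0 * u (2 • y)) := by ac_rfl

end IsKacBernstein

namespace IsAddKacBernstein

variable {A : Type*} [AddCommGroup A] {p q : X → A}

theorem eq_sub_two_nsmul (h : IsAddKacBernstein p q) (hp : ∀ x, p (-x) = p x)
    (hq : ∀ x, q (-x) = q x) (h2 : ∀ x : X, ∃ y, 2 • y = x) (x : X) :
    q x = p x - 2 • p 0 := by
  have h0 : p 0 + q 0 = 0 := by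
    have h00 := h 0 0
    rw [add_zero, sub_zero, neg_zero] at h00
    linear_combination (norm := module) -h00
  obtain ⟨y, rfl⟩ := h2 x
  have hyy := h y y
  have hyy' := h y (-y)
  rw [sub_self, hq] at hyy
  rw [add_neg_cancel, sub_neg_eq_add, neg_neg, hp] at hyy'
  rw [← two_nsmul] at hyy hyy'
  linear_combination (norm := module) hyy' - hyy + h0

theorem sub_map_zero_quadratic (h : IsAddKacBernstein p q) (hp : ∀ x, p (-x) = p x)
    (hq : ∀ x, q (-x) = q x) (h2 : ∀ x : X, ∃ y, 2 • y = x) (x y : X) :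
    (p (x + y) - p 0) + (p (x - y) - p 0) = 2 • ((p x - p 0) + (p y - p 0)) := by
  have hxy := h x y
  rw [hq, h.eq_sub_two_nsmul hp hq h2, h.eq_sub_two_nsmul hp hq h2,
    h.eq_sub_two_nsmul hp hq h2] at hxy
  linear_combination (norm := module) hxy

end IsAddKacBernstein

theorem IsKacBernstein.div_norm {f g : X → ℂ} (h : IsKacBernstein f g) :
    IsKacBernstein (fun x => f x / ‖f x‖) (fun x => g x / ‖g x‖) := by
  intro x y
  have h' := congrArg (fun z : ℂ => z / ‖z‖) (h x y)
  simpa only [norm_mul, ofReal_mul, mul_div_mul_comm] using h'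

theorem IsKacBernstein.log_norm {𝕜 : Type*} [NormedDivisionRing 𝕜] {f g : X → 𝕜}
    (h : IsKacBernstein f g) (hf0 : ∀ x, f x ≠ 0) (hg0 : ∀ x, g x ≠ 0) :
    IsAddKacBernstein (fun x => Real.log ‖f x‖) (fun x => Real.log ‖g x‖) := by
  intro x y
  have h' := congrArg (fun z : 𝕜 => Real.log ‖z‖) (h x y)
  simpa only [norm_mul, Real.log_mul, ne_eq, mul_eq_zero, norm_eq_zero, hf0, hg0, or_self,
    not_false_eq_true] using h'

namespace Complex

theorem div_norm_mul_conj_div_norm {z : ℂ} (hz : z ≠ 0) :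
    z / ‖z‖ * (conj z / ‖conj z‖) = 1 := by
  rw [norm_conj, div_mul_div_comm, mul_conj', ← sq]
  exact div_self (by simpa using hz)

theorem div_norm_mul_exp_log_norm {z : ℂ} (hz : z ≠ 0) :
    z / ‖z‖ * exp (Real.log ‖z‖) = z := by
  rw [← ofReal_exp, Real.exp_log (norm_pos_iff.mpr hz)]
  exact div_mul_cancel₀ z (by simpa using hz)

theorem exists_real_eq_of_mul_self_eq_one {z : ℂ} (hz : z * z = 1) :
    ∃ ε : ℝ, (ε = 1 ∨ ε = -1) ∧ (ε : ℂ) = z := by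
  rcases mul_self_eq_one_iff.mp hz with rfl | rfl
  · exact ⟨1, Or.inl rfl, ofReal_one⟩
  · exact ⟨-1, Or.inr rfl, by push_cast; rfl⟩

end Complex

end KacBernstein

theorem kac_bernstein_hermitian_two_divisible {X : Type*} [AddCommGroup X]
    (h2 : ∀ x : X, ∃ y : X, 2 • y = x)
    (f g : X → ℂ)
    (hf0 : ∀ x, f x ≠ 0) (hg0 : ∀ x, g x ≠ 0)
    (hfH : ∀ x : X, f (-x) = starRingEnd ℂ (f x))
    (hgH : ∀ x : X, g (-x) = starRingEnd ℂ (g x))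
    (hKB : ∀ x y : X, f (x + y) * g (x - y) = f x * f y * g x * g (-y)) :
    ∃ (ε δ : ℝ) (α β : X → ℂ) (P : X → ℝ) (r : ℝ),
      (ε = 1 ∨ ε = -1) ∧ (δ = 1 ∨ δ = -1) ∧
      (∀ x y : X, α (x + y) = α x * α y) ∧ (∀ x : X, ‖α x‖ = 1) ∧
      (∀ x y : X, β (x + y) = β x * β y) ∧ (∀ x : X, ‖β x‖ = 1) ∧
      (∀ x y : X, P (x + y) + P (x - y) = 2 * (P x + P y)) ∧
      (∀ x : X, f x = (ε : ℂ) * α x * Complex.exp ((P x + r : ℝ) : ℂ)) ∧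
      (∀ x : X, g x = (δ : ℂ) * β x * Complex.exp ((P x - r : ℝ) : ℂ)) := by
  have hfg : IsKacBernstein f g := hKB
  set u : X → ℂ := fun x => f x / ‖f x‖
  set v : X → ℂ := fun x => g x / ‖g x‖
  have hu (x : X) : u x * u (-x) = 1 := by
    simp only [u, hfH]; exact Complex.div_norm_mul_conj_div_norm (hf0 x)
  have hv (x : X) : v x * v (-x) = 1 := by
    simp only [v, hgH]; exact Complex.div_norm_mul_conj_div_norm (hg0 x)
  have hp (x : X) : Real.log ‖f (-x)‖ = Real.log ‖f x‖ := by rw [hfH, Complex.norm_conj]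
  have hq (x : X) : Real.log ‖g (-x)‖ = Real.log ‖g x‖ := by rw [hgH, Complex.norm_conj]
  have hpq := hfg.log_norm hf0 hg0
  have hu0 : u 0 * u 0 = 1 := by simpa using hu 0
  have hv0 : v 0 * v 0 = 1 := by simpa using hv 0
  obtain ⟨ε, hε, hεv⟩ := Complex.exists_real_eq_of_mul_self_eq_one hv0
  obtain ⟨δ, hδ, hδu⟩ := Complex.exists_real_eq_of_mul_self_eq_one hu0
  refine ⟨ε, δ, fun x => v 0 * u x, fun x => u 0 * v x,
    fun x => Real.log ‖f x‖ - Real.log ‖f 0‖, Real.log ‖f 0‖, hε, hδ,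
    hfg.div_norm.map_add hv h2, fun x => ?_, hfg.div_norm.swap.map_add hu h2, fun x => ?_,
    fun x y => ?_, fun x => ?_, fun x => ?_⟩
  · simp [u, v, hf0, hg0]
  · simp [u, v, hf0, hg0]
  · simpa only [nsmul_eq_mul, Nat.cast_ofNat] using hpq.sub_map_zero_quadratic hp hq h2 x y
  · rw [sub_add_cancel, hεv]
    linear_combination (Complex.div_norm_mul_exp_log_norm (hf0 x)).symm -
      u x * Complex.exp (Real.log ‖f x‖) * hv0
  · rw [sub_sub, ← two_nsmul, ← hpq.eq_sub_two_nsmul hp hq h2, hδu]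
    linear_combination (Complex.div_norm_mul_exp_log_norm (hg0 x)).symm -
      v x * Complex.exp (Real.log ‖g x‖) * hu0
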